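/- Let φ = (f₁,…,f_n) : 𝔻 → ℂⁿ be a holomorphic curve with φ'(z) ≠ 0, and let σ(z) = (1/2)·log(|f₁'(z)|² + ⋯ + |f_n'(z)|²). Then for every z ∈ 𝔻, Δσ(z) = 2·e^{−4σ(z)}·∑_{i<j} |f_i'(z)·f_j''(z) − f_j'(z)·f_i''(z)|². In particular Δσ(z) ≥ 0 on 𝔻. -/

import Mathlib

open Set Metric Complex

noncomputable section

/-- The Laplacian `Δu = u_xx + u_yy` of a real-valued function on `ℂ`. -/
def lap (u : ℂ → ℝ) (z : ℂ) : ℝ :=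
  lineDeriv ℝ (fun w => lineDeriv ℝ u w 1) z 1 +
    lineDeriv ℝ (fun w => lineDeriv ℝ u w Complex.I) z Complex.I

/-- `σ(z) = (1/2)·log(|f₁'(z)|² + ⋯ + |f_n'(z)|²)` for a holomorphic curve `φ`. -/
def curveSigma {n : ℕ} (φ : ℂ → EuclideanSpace ℂ (Fin n)) (z : ℂ) : ℝ :=
  (1 / 2) * Real.log (‖deriv φ z‖ ^ 2)

lemma lagrange_key {n : ℕ} (a b : Fin n → ℂ) :
    ∑ i : Fin n, ∑ j : Fin n, (a i * b j - a j * b i) * (starRingEnd ℂ) (a i * b j - a j * b i)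
      = 2 * ((∑ i : Fin n, a i * (starRingEnd ℂ) (a i)) * (∑ j : Fin n, b j * (starRingEnd ℂ) (b j)))
        - 2 * ((∑ i : Fin n, (starRingEnd ℂ) (a i) * b i) * (∑ j : Fin n, a j * (starRingEnd ℂ) (b j))) := by
  set c := starRingEnd ℂ
  have expand : ∀ i j : Fin n, (a i * b j - a j * b i) * c (a i * b j - a j * b i)
      = (a i * c (a i)) * (b j * c (b j)) + (a j * c (a j)) * (b i * c (b i))
        - ((c (a i) * b i) * (a j * c (b j)) + (c (a j) * b j) * (a i * c (b i))) := by
    intro i j; simp only [c, map_sub, map_mul]; ring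
  simp only [expand]
  simp only [Finset.sum_sub_distrib, Finset.sum_add_distrib]
  rw [show ∑ i : Fin n, ∑ j : Fin n, (a j * c (a j)) * (b i * c (b i))
      = ∑ j : Fin n, ∑ i : Fin n, (a j * c (a j)) * (b i * c (b i)) from Finset.sum_comm]
  rw [show ∑ i : Fin n, ∑ j : Fin n, (c (a j) * b j) * (a i * c (b i))
      = ∑ j : Fin n, ∑ i : Fin n, (c (a j) * b j) * (a i * c (b i)) from Finset.sum_comm]
  simp only [← Finset.mul_sum, ← Finset.sum_mul]
  ring

lemma lagrange {n : ℕ} (a b : Fin n → ℂ) :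
    ∑ i : Fin n, ∑ j : Fin n, (if i < j then Complex.normSq (a i * b j - a j * b i) else 0)
      = (∑ i : Fin n, Complex.normSq (a i)) * (∑ i : Fin n, Complex.normSq (b i))
        - Complex.normSq (∑ i : Fin n, (starRingEnd ℂ) (a i) * b i) := by
  set X : Fin n → Fin n → ℝ := fun i j => Complex.normSq (a i * b j - a j * b i) with hXdef
  have hX0 : ∀ i, X i i = 0 := by intro i; simp [hXdef]
  have hXs : ∀ i j, X i j = X j i := by
    intro i j
    have h : a i * b j - a j * b i = -(a j * b i - a i * b j) := by ring
    simp only [hXdef, h, Complex.normSq_neg]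
  have hfull : ∑ i : Fin n, ∑ j : Fin n, X i j
      = 2 * ((∑ i : Fin n, Complex.normSq (a i)) * (∑ i : Fin n, Complex.normSq (b i)))
        - 2 * Complex.normSq (∑ i : Fin n, (starRingEnd ℂ) (a i) * b i) := by
    have key := lagrange_key a b
    have h2 : (∑ j : Fin n, a j * (starRingEnd ℂ) (b j))
        = (starRingEnd ℂ) (∑ i : Fin n, (starRingEnd ℂ) (a i) * b i) := by
      rw [map_sum]; congr 1; funext i; rw [map_mul, Complex.conj_conj, mul_comm]
    rw [h2] at key
    simp only [Complex.mul_conj] at key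
    exact_mod_cast key
  have hdouble : 2 * (∑ i : Fin n, ∑ j : Fin n, (if i < j then X i j else 0))
      = ∑ i : Fin n, ∑ j : Fin n, X i j := by
    have hswap : ∑ i : Fin n, ∑ j : Fin n, (if i < j then X i j else 0)
        = ∑ i : Fin n, ∑ j : Fin n, (if j < i then X i j else 0) := by
      rw [Finset.sum_comm]
      apply Finset.sum_congr rfl; intro i _
      apply Finset.sum_congr rfl; intro j _
      rw [hXs]
    calc 2 * (∑ i : Fin n, ∑ j : Fin n, (if i < j then X i j else 0))
        = (∑ i : Fin n, ∑ j : Fin n, (if i < j then X i j else 0))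
          + (∑ i : Fin n, ∑ j : Fin n, (if j < i then X i j else 0)) := by rw [← hswap]; ring
      _ = ∑ i : Fin n, ∑ j : Fin n, ((if i < j then X i j else 0) + (if j < i then X i j else 0)) := by
          simp [Finset.sum_add_distrib]
      _ = ∑ i : Fin n, ∑ j : Fin n, X i j := by
          apply Finset.sum_congr rfl; intro i _
          apply Finset.sum_congr rfl; intro j _
          rcases lt_trichotomy i j with h | h | h
          · simp [h, not_lt_of_gt h]
          · simp [h, hX0]
          · simp [h, not_lt_of_gt h]
  linarith [hfull, hdouble]

/-- `Δσ(z) = 2·e^{-4σ(z)}·∑_{i<j} |f_i'(z)f_j''(z) − f_j'(z)f_i''(z)|²`, and in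
particular `Δσ ≥ 0`, for a holomorphic curve `φ = (f₁,…,f_n)` with `φ' ≠ 0` on `𝔻`. -/
theorem lap_curveSigma_eq {n : ℕ} (φ : ℂ → EuclideanSpace ℂ (Fin n))
    (hφ : DifferentiableOn ℂ φ (ball (0 : ℂ) 1))
    (hφ' : ∀ z ∈ ball (0 : ℂ) 1, deriv φ z ≠ 0) :
    ∀ z ∈ ball (0 : ℂ) 1,
      (lap (curveSigma φ) z =
        2 * Real.exp (-4 * curveSigma φ z) *
          ∑ i : Fin n, ∑ j : Fin n,
            if i < j then
              ‖deriv (fun w => φ w i) z * deriv (deriv (fun w => φ w j)) z -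
                deriv (fun w => φ w j) z * deriv (deriv (fun w => φ w i)) z‖ ^ 2
            else 0) ∧
      0 ≤ lap (curveSigma φ) z := by
  have hB : IsOpen (ball (0 : ℂ) 1) := isOpen_ball
  have han : AnalyticOnNhd ℂ φ (ball (0 : ℂ) 1) := hφ.analyticOnNhd hB
  set g : ℂ → EuclideanSpace ℂ (Fin n) := deriv φ with hgdef
  have hang : AnalyticOnNhd ℂ g (ball (0 : ℂ) 1) := han.deriv
  set g' : ℂ → EuclideanSpace ℂ (Fin n) := deriv g with hg'def
  have hang' : AnalyticOnNhd ℂ g' (ball (0 : ℂ) 1) := hang.deriv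
  set g'' : ℂ → EuclideanSpace ℂ (Fin n) := deriv g' with hg''def
  set S : ℂ → ℝ := fun w => ‖g w‖ ^ 2 with hSdef
  set A : ℂ → ℂ := fun w => (inner ℂ (g w) (g' w) : ℂ) with hAdef
  have hσ : curveSigma φ = fun w => (1 / 2) * Real.log (S w) := rfl
  have hSpos : ∀ w ∈ ball (0 : ℂ) 1, 0 < S w := fun w hw =>
    pow_pos (norm_pos_iff.mpr (hφ' w hw)) 2
  have hgR : ∀ w ∈ ball (0 : ℂ) 1, HasFDerivAt g
      (((1 : ℂ →L[ℂ] ℂ).smulRight (g' w)).restrictScalars ℝ) w := fun w hw =>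
    (((hang w hw).differentiableAt).hasDerivAt.hasFDerivAt).restrictScalars ℝ
  have hg'R : ∀ w ∈ ball (0 : ℂ) 1, HasFDerivAt g'
      (((1 : ℂ →L[ℂ] ℂ).smulRight (g'' w)).restrictScalars ℝ) w := fun w hw =>
    (((hang' w hw).differentiableAt).hasDerivAt.hasFDerivAt).restrictScalars ℝ
  have hSderiv : ∀ w ∈ ball (0 : ℂ) 1, HasFDerivAt S
      (Complex.reCLM.comp ((fderivInnerCLM ℂ (g w, g w)).comp
        ((((1 : ℂ →L[ℂ] ℂ).smulRight (g' w)).restrictScalars ℝ).prod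
         (((1 : ℂ →L[ℂ] ℂ).smulRight (g' w)).restrictScalars ℝ)))) w := by
    intro w hw
    have h1 := (hgR w hw).inner ℂ (hgR w hw)
    have h2 := Complex.reCLM.hasFDerivAt.comp w h1
    have hfun : S = fun t => Complex.reCLM (inner ℂ (g t) (g t) : ℂ) := by
      funext t
      rw [hSdef]
      simp only [Complex.reCLM_apply]
      rw [← inner_self_eq_norm_sq (𝕜 := ℂ) (g t), RCLike.re_to_complex]
    rw [hfun]
    exact h2
  have hσderiv : ∀ w ∈ ball (0 : ℂ) 1, ∀ v : ℂ,
      HasLineDerivAt ℝ (curveSigma φ) ((v * A w).re * (S w)⁻¹) w v := by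
    intro w hw v
    have hlog := ((hSderiv w hw).log (ne_of_gt (hSpos w hw))).const_mul (1/2 : ℝ)
    rw [hσ]
    have h := hlog.hasLineDerivAt v
    convert h using 1
    · rfl
    simp only [ContinuousLinearMap.coe_smul', Pi.smul_apply, ContinuousLinearMap.coe_comp',
      Function.comp_apply, ContinuousLinearMap.prod_apply,
      ContinuousLinearMap.coe_restrictScalars', ContinuousLinearMap.smulRight_apply,
      ContinuousLinearMap.one_apply, fderivInnerCLM_apply, Complex.reCLM_apply,
      inner_smul_right, inner_smul_left, smul_eq_mul]
    rw [hAdef]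
    rw [← inner_conj_symm (g' w) (g w)]
    simp only [Complex.add_re, Complex.mul_re, Complex.conj_re, Complex.conj_im,
      Complex.conj_conj]
    ring
  intro z hz
  have hSz := hSpos z hz
  -- second line derivatives
  have hsecond : ∀ v : ℂ,
      lineDeriv ℝ (fun w => lineDeriv ℝ (curveSigma φ) w v) z v
      = (v * A z).re * (-((S z) ^ 2)⁻¹ * (2 * (v * A z).re))
        + (S z)⁻¹ * (v * (v * (inner ℂ (g z) (g'' z) : ℂ)
            + (starRingEnd ℂ) v * (inner ℂ (g' z) (g' z) : ℂ))).re := by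
    intro v
    have hev : (fun w => lineDeriv ℝ (curveSigma φ) w v)
        =ᶠ[nhds z] fun w => (v * A w).re * (S w)⁻¹ := by
      filter_upwards [hB.mem_nhds hz] with w hw
      exact (hσderiv w hw v).lineDeriv
    rw [hev.lineDeriv_eq]
    have hAz := (hgR z hz).inner ℂ (hg'R z hz)
    have hnum : HasFDerivAt (fun w => (v * A w).re)
        (Complex.reCLM.comp (v • ((fderivInnerCLM ℂ (g z, g' z)).comp
          ((((1 : ℂ →L[ℂ] ℂ).smulRight (g' z)).restrictScalars ℝ).prod
           (((1 : ℂ →L[ℂ] ℂ).smulRight (g'' z)).restrictScalars ℝ))))) z := by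
      exact Complex.reCLM.hasFDerivAt.comp z (hAz.const_mul v)
    have hinv : HasFDerivAt (fun w => (S w)⁻¹)
        ((-((S z) ^ 2)⁻¹) • (Complex.reCLM.comp ((fderivInnerCLM ℂ (g z, g z)).comp
          ((((1 : ℂ →L[ℂ] ℂ).smulRight (g' z)).restrictScalars ℝ).prod
           (((1 : ℂ →L[ℂ] ℂ).smulRight (g' z)).restrictScalars ℝ))))) z := by
      exact (hasDerivAt_inv (ne_of_gt hSz)).comp_hasFDerivAt z (hSderiv z hz)
    have hprod := hnum.mul hinv
    have hval := (hprod.hasLineDerivAt v).lineDeriv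
    rw [show (fun w => (v * A w).re * (S w)⁻¹) = (fun w => (v * A w).re) * (fun w => (S w)⁻¹) from rfl, hval]
    simp only [ContinuousLinearMap.add_apply, ContinuousLinearMap.coe_smul', Pi.smul_apply,
      ContinuousLinearMap.coe_comp', Function.comp_apply, ContinuousLinearMap.prod_apply,
      ContinuousLinearMap.coe_restrictScalars', ContinuousLinearMap.smulRight_apply,
      ContinuousLinearMap.one_apply, fderivInnerCLM_apply, Complex.reCLM_apply,
      inner_smul_right, inner_smul_left, smul_eq_mul]
    rw [hAdef]
    rw [← inner_conj_symm (g' z) (g z)]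
    simp only [Complex.add_re, Complex.mul_re, Complex.conj_re, Complex.conj_im,
      Complex.conj_conj]
    ring
  -- evaluate lap
  have hre : (inner ℂ (g' z) (g' z) : ℂ).re = ‖g' z‖ ^ 2 := by
    have h := inner_self_eq_norm_sq (𝕜 := ℂ) (g' z)
    rw [RCLike.re_to_complex] at h
    exact h
  have him : (inner ℂ (g' z) (g' z) : ℂ).im = 0 := by
    have h := inner_self_im (𝕜 := ℂ) (g' z)
    rw [RCLike.im_to_complex] at h
    exact h
  have hlap : lap (curveSigma φ) z
      = 2 * (S z * ‖g' z‖ ^ 2 - Complex.normSq (A z)) * ((S z) ^ 2)⁻¹ := by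
    rw [lap, hsecond 1, hsecond Complex.I]
    simp only [one_mul, map_one, Complex.conj_I]
    simp only [Complex.add_re, Complex.mul_re, Complex.mul_im, Complex.I_re, Complex.I_im,
      Complex.add_im, Complex.neg_re, Complex.neg_im, Complex.one_re, Complex.one_im,
      Complex.normSq_apply]
    rw [hre, him]
    have hSne : S z ≠ 0 := ne_of_gt hSz
    generalize (inner ℂ (g z) (g'' z) : ℂ) = C
    generalize hA : A z = Az
    generalize hS : S z = Sz at hSne ⊢
    field_simp
    ring
  have hexp : Real.exp (-4 * curveSigma φ z) = ((S z) ^ 2)⁻¹ := by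
    have h4 : (-4 : ℝ) * curveSigma φ z = Real.log (((S z) ^ 2)⁻¹) := by
      have hlog2 : Real.log (((S z) ^ 2)⁻¹) = -(2 * Real.log (S z)) := by
        rw [Real.log_inv, Real.log_pow]; norm_num
      have hc : curveSigma φ z = 1 / 2 * Real.log (S z) := congrFun hσ z
      rw [hlog2, hc]; ring
    rw [h4, Real.exp_log (inv_pos.mpr (pow_pos hSz 2))]
  have hproj : ∀ (f : ℂ → EuclideanSpace ℂ (Fin n)) (w : ℂ), DifferentiableAt ℂ f w →
      ∀ i, deriv (fun x => f x i) w = deriv f w i := by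
    intro f w hf i
    exact ((EuclideanSpace.proj i).hasFDerivAt.comp_hasDerivAt w hf.hasDerivAt).deriv
  have hfi : ∀ i, deriv (fun w => φ w i) z = g z i :=
    fun i => hproj φ z (hφ.differentiableAt (hB.mem_nhds hz)) i
  have hfi'' : ∀ i, deriv (deriv (fun w => φ w i)) z = g' z i := by
    intro i
    have hev : deriv (fun w => φ w i) =ᶠ[nhds z] (fun w => g w i) := by
      filter_upwards [hB.mem_nhds hz] with w hw
      exact hproj φ w (hφ.differentiableAt (hB.mem_nhds hw)) i
    rw [hev.deriv_eq]
    exact hproj g z (hang z hz).differentiableAt i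
  have hnorm : ∀ (x : EuclideanSpace ℂ (Fin n)), ‖x‖ ^ 2 = ∑ i, Complex.normSq (x i) := by
    intro x
    rw [EuclideanSpace.norm_eq, Real.sq_sqrt (by positivity)]
    simp [Complex.sq_norm]
  have hAcoord : A z = ∑ i, (starRingEnd ℂ) (g z i) * (g' z i) := by
    rw [hAdef]
    simp only [PiLp.inner_apply, RCLike.inner_apply]
    exact Finset.sum_congr rfl fun i _ => mul_comm _ _
  have hsum : (∑ i : Fin n, ∑ j : Fin n,
        if i < j then
          ‖deriv (fun w => φ w i) z * deriv (deriv (fun w => φ w j)) z -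
            deriv (fun w => φ w j) z * deriv (deriv (fun w => φ w i)) z‖ ^ 2
        else 0)
      = S z * ‖g' z‖ ^ 2 - Complex.normSq (A z) := by
    have hl := lagrange (fun i => g z i) (fun i => g' z i)
    simp only [hfi, hfi'', Complex.sq_norm]
    rw [hl, hAcoord, ← hnorm (g z), ← hnorm (g' z)]
  constructor
  · rw [hlap, hexp, hsum]
    ring
  · rw [hlap]
    have hX : 0 ≤ S z * ‖g' z‖ ^ 2 - Complex.normSq (A z) := by
      rw [← hsum]
      apply Finset.sum_nonneg
      intro i _
      apply Finset.sum_nonneg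
      intro j _
      split
      · positivity
      · exact le_refl 0
    positivity

end
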